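/- For every λ ∈ [0,∞)^m and every feasible point z of program (lw) for G(λ), there exist sums of squares σ₀, σ₁, …, σ_m ∈ ∑ℝ[x]² with deg σ₀ ≤ d and deg(σ_j g_j) ≤ d for j = 1,…,m such that f − (G(λ)(0) − v(z)) = σ₀ + ∑_{j=1}^m σ_j g_j. Consequently G(λ)_gp ≤ f_sos^{(d)} := sup{r ∈ ℝ : f − r = ∑_{j=0}^m σ_j g_j with g₀ := 1, σ_j ∈ ∑ℝ[x]², deg(σ_j g_j) ≤ d for all j}, and hence s(f,g) ≤ f_sos^{(d)}. -/

import Mathlib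

open MvPolynomial Finset

noncomputable section

/-- `Finset.filter` with classical decidability. -/
def pfilter {β : Type*} (s : Finset β) (q : β → Prop) : Finset β :=
  @Finset.filter β q (fun _ => Classical.propDecidable _) s

/-- `|α| := α₁ + ⋯ + αₙ` for a multi-index `α`. -/
def adeg {n : ℕ} (α : Fin n →₀ ℕ) : ℕ := ∑ i, α i

/-- `Ω(p) := {α : |α| ≤ d, p_α ≠ 0, α ∉ {0, ε₁, …, εₙ}}`. -/
def OmegaSet {n : ℕ} (d : ℕ) (p : MvPolynomial (Fin n) ℝ) : Finset (Fin n →₀ ℕ) :=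
  pfilter p.support (fun α => adeg α ≤ d ∧ α ≠ 0 ∧ ∀ i, α ≠ Finsupp.single i d)

/-- `Δ(p) := {α ∈ Ω(p) : p_α x^α is not a square}`. -/
def DelSet {n : ℕ} (d : ℕ) (p : MvPolynomial (Fin n) ℝ) : Finset (Fin n →₀ ℕ) :=
  pfilter (OmegaSet d p)
    (fun α => ¬ IsSquare ((monomial α (p.coeff α)) : MvPolynomial (Fin n) ℝ))

/-- Feasibility for program (lw) for `p`. -/
def LwFeas {n : ℕ} (d : ℕ) (p : MvPolynomial (Fin n) ℝ)
    (z : (Fin n →₀ ℕ) → Fin n → ℝ) : Prop :=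
  (∀ α ∈ DelSet d p, ∀ i, 0 ≤ z α i ∧ (z α i = 0 ↔ α i = 0)) ∧
  (∀ i, ∑ α ∈ DelSet d p, z α i ≤ p.coeff (Finsupp.single i d)) ∧
  (∀ α ∈ DelSet d p, adeg α = d →
    ∏ i, (z α i / (α i : ℝ)) ^ (α i) = (p.coeff α / (d : ℝ)) ^ d)

/-- The objective function `v` of program (lw). -/
def lwObj {n : ℕ} (d : ℕ) (p : MvPolynomial (Fin n) ℝ)
    (z : (Fin n →₀ ℕ) → Fin n → ℝ) : ℝ :=
  ∑ α ∈ pfilter (DelSet d p) (fun α => adeg α < d),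
    ((d : ℝ) - (adeg α : ℝ)) *
      (((p.coeff α / (d : ℝ)) ^ d * ∏ i, ((α i : ℝ) / z α i) ^ (α i)) ^
        ((1 : ℝ) / ((d : ℝ) - (adeg α : ℝ))))

/-- `ρ(p) ∈ [0,∞]`, the infimum of `v` over the feasible set (`⊤` if infeasible). -/
def lwRho {n : ℕ} (d : ℕ) (p : MvPolynomial (Fin n) ℝ) : EReal :=
  sInf ((fun z => ((lwObj d p z : ℝ) : EReal)) '' {z | LwFeas d p z})

/-- `p_gp := p(0) − ρ(p) ∈ ℝ ∪ {−∞}`. -/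
def lwGp {n : ℕ} (d : ℕ) (p : MvPolynomial (Fin n) ℝ) : EReal :=
  ((eval (0 : Fin n → ℝ) p : ℝ) : EReal) - lwRho d p

/-- `G(λ) := f − ∑ⱼ λⱼ gⱼ`. -/
def polyG {n m : ℕ} (f : MvPolynomial (Fin n) ℝ) (g : Fin m → MvPolynomial (Fin n) ℝ)
    (lam : Fin m → ℝ) : MvPolynomial (Fin n) ℝ :=
  f - ∑ j, C (lam j) * g j

/-- `s(f,g) := sup{G(λ)_gp : λ ∈ [0,∞)^m}`. -/
def sBound {n m : ℕ} (d : ℕ) (f : MvPolynomial (Fin n) ℝ)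
    (g : Fin m → MvPolynomial (Fin n) ℝ) : EReal :=
  sSup ((fun lam => lwGp d (polyG f g lam)) '' {lam : Fin m → ℝ | ∀ j, 0 ≤ lam j})


/-- `p` is a sum of squares of polynomials. -/
def IsSOS {n : ℕ} (p : MvPolynomial (Fin n) ℝ) : Prop :=
  ∃ (k : ℕ) (q : Fin k → MvPolynomial (Fin n) ℝ), p = ∑ t, q t ^ 2

/-- `f_sos^{(d)} := sup{r : f − r = σ₀ + ∑ σⱼ gⱼ, σⱼ SOS, deg σ₀ ≤ d, deg(σⱼ gⱼ) ≤ d}`. -/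
def fsos {n m : ℕ} (d : ℕ) (f : MvPolynomial (Fin n) ℝ)
    (g : Fin m → MvPolynomial (Fin n) ℝ) : EReal :=
  sSup ((fun r : ℝ => (r : EReal)) '' {r | ∃ σ₀ : MvPolynomial (Fin n) ℝ,
    ∃ σ : Fin m → MvPolynomial (Fin n) ℝ, IsSOS σ₀ ∧ (∀ j, IsSOS (σ j)) ∧
    σ₀.totalDegree ≤ d ∧ (∀ j, (σ j * g j).totalDegree ≤ d) ∧
    f - C r = σ₀ + ∑ j, σ j * g j})

/-!
Fix `λ ≥ 0`, put `p := G(λ)` and let `z` be feasible for (lw). For `α ∈ Δ(p)` with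
`t_α := ((p_α/d)^d ∏ (α_i/z_{α,i})^{α_i})^{1/(d-|α|)}`, the polynomial
`p_α x^α + ∑ᵢ z_{α,i} xᵢ^d + (d - |α|) t_α` is the AM–GM polynomial with weights
`(α, d - |α|)` evaluated at `λᵢ xᵢ` and at the constant `μ`, where `λᵢ^d = z_{α,i}/αᵢ` and
`μ^d = t_α`; the constraint of (lw) says exactly that the geometric-mean term is `p_α x^α`.
By Hurwitz, AM–GM polynomials `∑ bᵢ qᵢ^m - m ∏ qᵢ^{bᵢ}` in sums of squares `qᵢ` are sums of
squares: merging two weights at a time reduces everything to two variables, where it is the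
chord inequality for a sequence whose second differences are sums of squares. Summing over
`Δ(p)`, what is left of `p - p(0) + v(z)` are square monomials and the terms
`(p_{d,i} - ∑_α z_{α,i}) xᵢ^d` with nonnegative coefficients. Hence
`f - (p(0) - v(z)) = (p - p(0) + v(z)) + ∑ⱼ λⱼ gⱼ` is a certificate of degree `≤ d`, and the
two bounds follow by passing to the infimum over `z` and the supremum over `λ`.
-/

theorem IsSumSq.nsmul {R : Type*} [AddCommMonoid R] [Mul R] {x : R} (h : IsSumSq x) (k : ℕ) :
    IsSumSq (k • x) :=
  nsmul_mem (S := AddSubmonoid.sumSq R) h k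

theorem IsSumSq.pow {R : Type*} [CommSemiring R] {x : R} (h : IsSumSq x) (k : ℕ) :
    IsSumSq (x ^ k) := by
  simpa using pow_mem (Subsemiring.mem_sumSq.mpr h) k

theorem IsSumSq.of_nsmul {R : Type*} [CommRing R] [Algebra ℚ R] {x : R} {k : ℕ} (hk : k ≠ 0)
    (h : IsSumSq (k • x)) : IsSumSq x := by
  have hx : x = algebraMap ℚ R (k : ℚ)⁻¹ ^ 2 * (k • k • x) := by
    simp only [nsmul_eq_mul, ← mul_assoc, ← pow_two]
    rw [← map_natCast (algebraMap ℚ R), ← map_pow, ← map_pow, ← map_mul, inv_pow,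
      inv_mul_cancel₀ (by positivity), map_one, one_mul]
  rw [hx]
  exact (IsSquare.sq _).isSumSq.mul (h.nsmul k)

section ConvexSequence

variable {R : Type*} [CommRing R] {B : ℕ → R}

theorem isSumSq_diff_sub_diff_of_secondDiff {L : ℕ}
    (hB : ∀ k, k + 2 ≤ L → IsSumSq (B (k + 2) + B k - 2 * B (k + 1))) {j k : ℕ} (hjk : j ≤ k)
    (hk : k + 1 ≤ L) : IsSumSq ((B (k + 1) - B k) - (B (j + 1) - B j)) := by
  induction k, hjk using Nat.le_induction with
  | base => simp
  | succ k hjk ih =>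
    exact (congrArg IsSumSq (by ring)).mp ((hB k hk).add (ih (by omega)))

theorem isSumSq_chord_sub_of_secondDiff {s t : ℕ}
    (hB : ∀ k, k + 2 ≤ t + s → IsSumSq (B (k + 2) + B k - 2 * B (k + 1))) :
    IsSumSq (s • B 0 + t • B (t + s) - (t + s) • B t) := by
  have hD := IsSumSq.sum (I := range t) fun j hj => IsSumSq.sum (I := Ico t (t + s))
    fun k hk => isSumSq_diff_sub_diff_of_secondDiff hB (j := j) (k := k)
      (by simp at hj hk; omega) (by simp at hk; omega)
  have inner (j : ℕ) : ∑ k ∈ Ico t (t + s), ((B (k + 1) - B k) - (B (j + 1) - B j)) =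
      (B (t + s) - B t) - s • (B (j + 1) - B j) := by
    rw [sum_sub_distrib, sum_Ico_sub B (Nat.le_add_right t s), sum_const, Nat.card_Ico,
      Nat.add_sub_cancel_left]
  rw [sum_congr rfl fun j _ => inner j, sum_sub_distrib, sum_const, card_range, ← smul_sum,
    sum_range_sub] at hD
  refine (congrArg IsSumSq ?_).mp hD
  simp only [add_smul, smul_sub]
  abel

end ConvexSequence

theorem isSumSq_nsmul_pow_add_nsmul_pow_sub {R : Type*} [CommRing R] {q r : R}
    (hq : IsSumSq q) (hr : IsSumSq r) (a b : ℕ) :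
    IsSumSq (a • q ^ (a + b) + b • r ^ (a + b) - (a + b) • (q ^ a * r ^ b)) := by
  have hB : ∀ k, k + 2 ≤ a + b → IsSumSq (q ^ (k + 2) * r ^ (a + b - (k + 2)) +
      q ^ k * r ^ (a + b - k) - 2 * (q ^ (k + 1) * r ^ (a + b - (k + 1)))) := by
    intro k hk
    obtain ⟨l, hl⟩ := Nat.exists_eq_add_of_le hk
    rw [hl, show k + 2 + l - (k + 2) = l by omega, show k + 2 + l - k = l + 2 by omega,
      show k + 2 + l - (k + 1) = l + 1 by omega]
    refine (congrArg IsSumSq ?_).mp (IsSumSq.mul ((IsSquare.sq (q - r)).isSumSq)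
      ((hq.pow k).mul (hr.pow l)))
    ring
  refine (congrArg IsSumSq ?_).mp
    (isSumSq_chord_sub_of_secondDiff (B := fun k => q ^ k * r ^ (a + b - k)) hB)
  simp only [Nat.sub_zero, Nat.sub_self, Nat.add_sub_cancel_left, pow_zero, one_mul, mul_one]
  abel

theorem isSumSq_sum_nsmul_pow_sub_nsmul_prod_pow {R : Type*} [CommRing R] [Algebra ℚ R] {s : ℕ}
    {q : Fin s → R} (hq : ∀ i, IsSumSq (q i)) (b : Fin s → ℕ) :
    IsSumSq (∑ i, b i • q i ^ (∑ j, b j) - (∑ j, b j) • ∏ i, q i ^ b i) := by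
  induction s with
  | zero => simp
  | succ s ih =>
    cases s with
    | zero => simp
    | succ s =>
      have IH₀ := ih (q := Fin.cons (q 0) fun k => q k.succ.succ)
        (Fin.cases (hq 0) fun k => hq _) (Fin.cons (b 0 + b 1) fun k => b k.succ.succ)
      have IH₁ := ih (q := Fin.cons (q 1) fun k => q k.succ.succ)
        (Fin.cases (hq 1) fun k => hq _) (Fin.cons (b 0 + b 1) fun k => b k.succ.succ)
      have hrest := IsSumSq.prod (I := univ) fun (k : Fin s) _ =>
        (hq k.succ.succ).pow (b k.succ.succ)
      have hbin := isSumSq_nsmul_pow_add_nsmul_pow_sub (hq 0) (hq 1) (b 0) (b 1)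
      simp only [Fin.sum_univ_succ, Fin.prod_univ_succ, Fin.cons_zero,
        Fin.cons_succ, Fin.succ_zero_eq_one, add_assoc] at IH₀ IH₁ ⊢
      rcases Nat.eq_zero_or_pos (b 0 + b 1) with h0 | hpos
      · obtain ⟨hb₀, hb₁⟩ : b 0 = 0 ∧ b 1 = 0 := by omega
        simpa [hb₀, hb₁] using IH₀
      -- With `x = b 0`, `y = b 1`, `m = ∑ b` and `gap c := ∑ cᵢ qᵢ^m - m ∏ qᵢ^cᵢ`,
      -- `(x + y) gap b = x gap b₀ + y gap b₁ + m (∏_{i ≥ 2} qᵢ^bᵢ) (binary gap of q₀, q₁)`,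
      -- where `bₖ` moves the weights of `q₀` and `q₁` onto `qₖ`.
      refine IsSumSq.of_nsmul hpos.ne' ?_
      refine (congrArg IsSumSq ?_).mp (((IH₀.nsmul (b 0)).add (IH₁.nsmul (b 1))).add
        ((hrest.mul hbin).nsmul (b 0 + (b 1 + ∑ k : Fin s, b k.succ.succ))))
      simp only [nsmul_eq_mul]
      push_cast
      ring

theorem isSumSq_sum_nsmul_pow_sub_mul_nsmul_prod_pow {R : Type*} [CommRing R] [Algebra ℚ R]
    {N d : ℕ} (x : Fin N → R) (γ : Fin N →₀ ℕ) (hγ : γ.degree = d) (hd : Even d) {ε : R}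
    (hε : ε ^ 2 = 1) :
    IsSumSq (∑ i, γ i • x i ^ d - ε * (d • ∏ i, x i ^ γ i)) := by
  obtain ⟨k, rfl⟩ := hd
  obtain ⟨a, hle, ha⟩ := Finsupp.exists_le_degree_eq γ k (by omega)
  obtain ⟨b, rfl⟩ := exists_add_of_le hle
  have hb : b.degree = k := by rw [map_add, ha] at hγ; omega
  have hprod (c : Fin N →₀ ℕ) : ∏ i, (x i ^ 2) ^ c i = (∏ i, x i ^ c i) ^ 2 := by
    rw [← prod_pow]
    exact prod_congr rfl fun i _ => pow_right_comm _ _ _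
  have hsq : ∀ i, IsSumSq (x i ^ 2) := fun i => (IsSquare.sq _).isSumSq
  have Ha := isSumSq_sum_nsmul_pow_sub_nsmul_prod_pow hsq a
  have Hb := isSumSq_sum_nsmul_pow_sub_nsmul_prod_pow hsq b
  rw [← Finsupp.degree_eq_sum, ha, hprod] at Ha
  rw [← Finsupp.degree_eq_sum, hb, hprod] at Hb
  -- With `A = ∏ xᵢ^aᵢ`, `B = ∏ xᵢ^bᵢ` the target is `Ha + Hb + k (A - ε B)²`.
  refine (congrArg IsSumSq ?_).mp ((Ha.add Hb).add
    (((IsSquare.sq ((∏ i, x i ^ a i) - ε * ∏ i, x i ^ b i)).isSumSq).nsmul k))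
  simp only [Finsupp.coe_add, Pi.add_apply, add_smul, sum_add_distrib, pow_add,
    prod_mul_distrib, ← pow_mul, ← two_mul, nsmul_eq_mul]
  push_cast
  linear_combination ((k : R) * (∏ i, x i ^ b i) ^ 2) * hε

theorem isSumSq_C {σ : Type*} {c : ℝ} (hc : 0 ≤ c) : IsSumSq (C c : MvPolynomial σ ℝ) := by
  rw [← Real.mul_self_sqrt hc, C_mul]
  exact IsSumSq.mul_self _

theorem monomial_eq_C_mul_prod {σ R : Type*} [Fintype σ] [CommSemiring R] (α : σ →₀ ℕ) (c : R) :
    monomial α c = C c * ∏ i, (X i : MvPolynomial σ R) ^ α i := by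
  rw [monomial_eq, Finsupp.prod_fintype _ _ fun i => pow_zero _]

theorem isSumSq_monomial_add_sum_add_C {n d : ℕ} (hd : Even d) {α : Fin n →₀ ℕ}
    (hα : α.degree ≤ d) {c μ : ℝ} {lam : Fin n → ℝ}
    (hc : |c| = d * μ ^ (d - α.degree) * ∏ i, lam i ^ α i) :
    IsSumSq (monomial α c + ∑ i, C (α i * lam i ^ d) * X i ^ d +
      C (((d - α.degree : ℕ) : ℝ) * μ ^ d)) := by
  obtain ⟨ε, hε, hcε⟩ : ∃ ε : ℝ, ε ^ 2 = 1 ∧ c = -ε * |c| := by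
    rcases le_or_gt 0 c with h | h
    · exact ⟨-1, by norm_num, by rw [abs_of_nonneg h]; ring⟩
    · exact ⟨1, by norm_num, by rw [abs_of_neg h]; ring⟩
  have hγ : (Finsupp.cons (d - α.degree) α).degree = d := by
    rw [Finsupp.degree_eq_sum, Fin.sum_univ_succ, Finsupp.cons_zero]
    simp only [Finsupp.cons_succ, ← Finsupp.degree_eq_sum]
    omega
  have key := isSumSq_sum_nsmul_pow_sub_mul_nsmul_prod_pow
    (Fin.cons (C μ) fun i => C (lam i) * X i) _ hγ hd (ε := C ε) (by rw [← C_pow, hε, C_1])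
  refine (congrArg IsSumSq ?_).mp key
  simp only [Fin.sum_univ_succ, Fin.prod_univ_succ, Finsupp.cons_zero, Finsupp.cons_succ,
    Fin.cons_zero, Fin.cons_succ, mul_pow, prod_mul_distrib, nsmul_eq_mul, monomial_eq_C_mul_prod]
  rw [hcε, hc]
  simp only [map_mul, map_neg, map_pow, map_prod, map_natCast, mul_assoc]
  ring

theorem isSumSq_monomial_add_sum_add_C_of_pow_eq {n d : ℕ} (hd : Even d) (hd0 : d ≠ 0)
    {α : Fin n →₀ ℕ} (hα : α.degree ≤ d) {c t : ℝ} {z : Fin n → ℝ} (hz : ∀ i, 0 ≤ z i)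
    (hzα : ∀ i, α i = 0 → z i = 0) (ht : 0 ≤ t)
    (h : (c / d) ^ d = t ^ (d - α.degree) * ∏ i, (z i / α i) ^ α i) :
    IsSumSq (monomial α c + ∑ i, C (z i) * X i ^ d + C (((d : ℝ) - α.degree) * t)) := by
  set lam : Fin n → ℝ := fun i => (z i / α i) ^ (d⁻¹ : ℝ)
  set μ : ℝ := t ^ (d⁻¹ : ℝ)
  have hlam (i : Fin n) : lam i ^ d = z i / α i :=
    Real.rpow_inv_natCast_pow (div_nonneg (hz i) (Nat.cast_nonneg _)) hd0
  have hμ : μ ^ d = t := Real.rpow_inv_natCast_pow ht hd0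
  have hz' (i : Fin n) : α i * lam i ^ d = z i := by
    rw [hlam]
    rcases eq_or_ne (α i) 0 with h0 | h0
    · simp [h0, hzα i h0]
    · exact mul_div_cancel₀ _ (Nat.cast_ne_zero.mpr h0)
  have hc : |c| = d * μ ^ (d - α.degree) * ∏ i, lam i ^ α i := by
    have hK : 0 ≤ d * μ ^ (d - α.degree) * ∏ i, lam i ^ α i :=
      mul_nonneg (mul_nonneg d.cast_nonneg (pow_nonneg (Real.rpow_nonneg ht _) _))
        (prod_nonneg fun i _ =>
          pow_nonneg (Real.rpow_nonneg (div_nonneg (hz i) (α i).cast_nonneg) _) _)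
    refine (pow_left_inj₀ (abs_nonneg c) hK hd0).mp ?_
    rw [hd.pow_abs, mul_pow, mul_pow, ← prod_pow, pow_right_comm, hμ]
    simp only [pow_right_comm _ (α _) d, hlam]
    rw [mul_assoc, ← h, div_pow, mul_div_cancel₀ _ (pow_ne_zero _ (Nat.cast_ne_zero.mpr hd0))]
  have key := isSumSq_monomial_add_sum_add_C hd hα hc
  simpa only [hz', Nat.cast_sub hα, hμ] using key

theorem mem_pfilter {β : Type*} {s : Finset β} {q : β → Prop} {a : β} :
    a ∈ pfilter s q ↔ a ∈ s ∧ q a :=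
  @Finset.mem_filter _ _ (fun _ => Classical.propDecidable _) _ _

section LwProgram

variable {n d : ℕ} {p : MvPolynomial (Fin n) ℝ}

theorem mem_omegaSet {α : Fin n →₀ ℕ} :
    α ∈ OmegaSet d p ↔ α ∈ p.support ∧ adeg α ≤ d ∧ α ≠ 0 ∧ ∀ i, α ≠ Finsupp.single i d :=
  mem_pfilter

theorem mem_delSet {α : Fin n →₀ ℕ} :
    α ∈ DelSet d p ↔ α ∈ OmegaSet d p ∧ ¬ IsSquare (monomial α (p.coeff α)) :=
  mem_pfilter

theorem adeg_le_of_mem_omegaSet {α : Fin n →₀ ℕ} (hα : α ∈ OmegaSet d p) : adeg α ≤ d :=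
  (mem_omegaSet.mp hα).2.1

theorem eq_C_add_sum_monomial_single_add_sum_omegaSet (hd : d ≠ 0) (hp : p.totalDegree ≤ d) :
    p = C (p.coeff 0) + ∑ i, monomial (Finsupp.single i d) (p.coeff (Finsupp.single i d)) +
      ∑ α ∈ OmegaSet d p, monomial α (p.coeff α) := by
  ext β
  simp only [coeff_add, coeff_C, coeff_sum, coeff_monomial, sum_ite_eq']
  by_cases hΩ : β ∈ OmegaSet d p
  · obtain ⟨-, -, hβ0, hβd⟩ := mem_omegaSet.mp hΩ
    simp [hΩ, Ne.symm hβ0, fun i => Ne.symm (hβd i)]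
  rw [if_neg hΩ, add_zero]
  by_cases hβ : β ∈ p.support
  · have hβd : adeg β ≤ d := by
      rw [adeg, ← Finsupp.degree_eq_sum]
      exact (le_totalDegree hβ).trans hp
    simp only [mem_omegaSet, hβ, hβd, true_and, not_and_or, not_not, not_forall] at hΩ
    rcases hΩ with rfl | ⟨i, rfl⟩
    · simp [hd]
    · simp [eq_comm (a := (0 : Fin n →₀ ℕ)), hd, Finsupp.single_left_inj hd]
  · have h0 : ∀ γ, γ = β → p.coeff γ = 0 := fun γ h => h ▸ notMem_support_iff.mp hβ
    rw [h0 β rfl, sum_eq_zero fun i _ => ite_eq_right_iff.mpr (h0 _), ite_eq_right_iff.mpr (h0 0),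
      add_zero]

/-- `t_α`, so that `v(z) = ∑_{α ∈ Δ(p)} (d - |α|) t_α`. For `|α| = d` the exponent is the junk
value `1 / 0 = 0`, which is harmless since the weight `d - |α|` vanishes. -/
def lwTerm (d : ℕ) (p : MvPolynomial (Fin n) ℝ) (z : (Fin n →₀ ℕ) → Fin n → ℝ)
    (α : Fin n →₀ ℕ) : ℝ :=
  ((p.coeff α / d) ^ d * ∏ i, ((α i : ℝ) / z α i) ^ α i) ^ ((1 : ℝ) / ((d : ℝ) - adeg α))

theorem lwObj_eq_sum_delSet (z : (Fin n →₀ ℕ) → Fin n → ℝ) :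
    lwObj d p z = ∑ α ∈ DelSet d p, ((d : ℝ) - adeg α) * lwTerm d p z α := by
  refine sum_subset (fun α hα => (mem_pfilter.mp hα).1) fun α hα hlt => ?_
  have hα : adeg α = d := (adeg_le_of_mem_omegaSet (mem_delSet.mp hα).1).antisymm
    (not_lt.mp fun h => hlt (mem_pfilter.mpr ⟨hα, h⟩))
  rw [hα, sub_self, zero_mul]

theorem lwTerm_base_nonneg (hde : Even d) {z : (Fin n →₀ ℕ) → Fin n → ℝ} (hz : LwFeas d p z)
    {α : Fin n →₀ ℕ} (hα : α ∈ DelSet d p) :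
    0 ≤ (p.coeff α / d) ^ d * ∏ i, ((α i : ℝ) / z α i) ^ α i :=
  mul_nonneg (hde.pow_nonneg _)
    (prod_nonneg fun i _ => pow_nonneg (div_nonneg (α i).cast_nonneg (hz.1 α hα i).1) _)

theorem coeff_div_pow_eq_of_lwFeas (hde : Even d) {z : (Fin n →₀ ℕ) → Fin n → ℝ} (hz : LwFeas d p z)
    {α : Fin n →₀ ℕ} (hα : α ∈ DelSet d p) :
    (p.coeff α / d) ^ d = lwTerm d p z α ^ (d - adeg α) * ∏ i, (z α i / α i) ^ α i := by
  obtain ⟨hz0, -, hzd⟩ := id hz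
  rcases (adeg_le_of_mem_omegaSet (mem_delSet.mp hα).1).eq_or_lt with hd | hd
  · rw [hd, Nat.sub_self, pow_zero, one_mul, hzd α hα hd]
  have hinv : (∏ i, ((α i : ℝ) / z α i) ^ α i) * ∏ i, (z α i / α i) ^ α i = 1 := by
    rw [← prod_mul_distrib]
    refine prod_eq_one fun i _ => ?_
    rcases eq_or_ne (α i) 0 with h0 | h0
    · simp [h0]
    · have hzi : z α i ≠ 0 := fun h => h0 ((hz0 α hα i).2.mp h)
      rw [← mul_pow, div_mul_div_cancel₀ hzi, div_self (Nat.cast_ne_zero.mpr h0), one_pow]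
  have hroot : lwTerm d p z α ^ (d - adeg α) =
      (p.coeff α / d) ^ d * ∏ i, ((α i : ℝ) / z α i) ^ α i := by
    rw [lwTerm, one_div, ← Nat.cast_sub hd.le]
    exact Real.rpow_inv_natCast_pow (lwTerm_base_nonneg hde hz hα) (by omega)
  rw [hroot, mul_assoc, hinv, mul_one]

theorem isSumSq_sub_C_eval_add_C_lwObj (hde : Even d) (hd : d ≠ 0) (hp : p.totalDegree ≤ d)
    {z : (Fin n →₀ ℕ) → Fin n → ℝ} (hz : LwFeas d p z) :
    IsSumSq (p - C (eval 0 p) + C (lwObj d p z)) := by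
  have hT : ∀ α ∈ DelSet d p, IsSumSq (monomial α (p.coeff α) + ∑ i, C (z α i) * X i ^ d +
      C (((d : ℝ) - adeg α) * lwTerm d p z α)) := by
    intro α hα
    have hdeg : adeg α = α.degree := (Finsupp.degree_eq_sum α).symm
    have h := coeff_div_pow_eq_of_lwFeas hde hz hα
    rw [hdeg] at h ⊢
    exact isSumSq_monomial_add_sum_add_C_of_pow_eq hde hd
      (hdeg ▸ adeg_le_of_mem_omegaSet (mem_delSet.mp hα).1) (fun i => (hz.1 α hα i).1)
      (fun i => (hz.1 α hα i).2.mpr) (Real.rpow_nonneg (lwTerm_base_nonneg hde hz hα) _) h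
  have hS : ∀ α ∈ OmegaSet d p \ DelSet d p, IsSumSq (monomial α (p.coeff α)) := by
    intro α hα
    rw [mem_sdiff, mem_delSet] at hα
    exact (not_not.mp fun h => hα.2 ⟨hα.1, h⟩).isSumSq
  have hdiag (i : Fin n) :
      IsSumSq (C (p.coeff (Finsupp.single i d) - ∑ α ∈ DelSet d p, z α i) * X i ^ d) := by
    obtain ⟨k, rfl⟩ := hde
    rw [pow_add]
    exact (isSumSq_C (sub_nonneg.mpr (hz.2.1 i))).mul (IsSumSq.mul_self _)
  have hdec := eq_C_add_sum_monomial_single_add_sum_omegaSet hd hp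
  have hsd := sum_sdiff (f := fun α => monomial α (p.coeff α))
    fun α (hα : α ∈ DelSet d p) => (mem_delSet.mp hα).1
  have hsplit : ∑ i, C (p.coeff (Finsupp.single i d) - ∑ α ∈ DelSet d p, z α i) * X i ^ d =
      ∑ i, monomial (Finsupp.single i d) (p.coeff (Finsupp.single i d)) -
        ∑ α ∈ DelSet d p, ∑ i, C (z α i) * X i ^ d := by
    simp only [map_sub, sub_mul, map_sum, sum_mul, sum_sub_distrib, C_mul_X_pow_eq_monomial]
    rw [sum_comm]
  have key : p - C (eval 0 p) + C (lwObj d p z) =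
      ∑ α ∈ DelSet d p, (monomial α (p.coeff α) + ∑ i, C (z α i) * X i ^ d +
        C (((d : ℝ) - adeg α) * lwTerm d p z α)) +
      ∑ α ∈ OmegaSet d p \ DelSet d p, monomial α (p.coeff α) +
      ∑ i, C (p.coeff (Finsupp.single i d) - ∑ α ∈ DelSet d p, z α i) * X i ^ d := by
    rw [hsplit, sum_add_distrib, sum_add_distrib, lwObj_eq_sum_delSet, map_sum, eval_zero,
      constantCoeff_eq]
    linear_combination hdec - hsd
  rw [key]
  exact ((IsSumSq.sum hT).add (IsSumSq.sum hS)).add (IsSumSq.sum fun i _ => hdiag i)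

end LwProgram

theorem EReal.sub_le_comm {a b c : EReal} : a - b ≤ c ↔ a - c ≤ b := by
  by_cases h₁ : b ≠ ⊥ ∨ c ≠ ⊤
  · by_cases h₂ : b ≠ ⊤ ∨ c ≠ ⊥
    · rw [EReal.sub_le_iff_le_add h₁ h₂, EReal.sub_le_iff_le_add h₂.symm h₁.symm, add_comm]
    · obtain ⟨rfl, rfl⟩ : b = ⊤ ∧ c = ⊥ := by simpa [not_or] using h₂
      simp
  · obtain ⟨rfl, rfl⟩ : b = ⊥ ∧ c = ⊤ := by simpa [not_or] using h₁
    simp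

theorem EReal.sub_sInf_le {a c : EReal} {s : Set EReal} (h : ∀ b ∈ s, a - b ≤ c) :
    a - sInf s ≤ c :=
  EReal.sub_le_comm.mpr (le_sInf fun b hb => EReal.sub_le_comm.mp (h b hb))

theorem IsSumSq.isSOS {n : ℕ} {p : MvPolynomial (Fin n) ℝ} (h : IsSumSq p) : IsSOS p := by
  induction h with
  | zero => exact ⟨0, Fin.elim0, by simp⟩
  | sq_add a _ ih =>
    obtain ⟨k, q, rfl⟩ := ih
    exact ⟨k + 1, Fin.cons a q, by simp [Fin.sum_univ_succ, sq]⟩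

theorem totalDegree_C_mul_le {σ R : Type*} [CommSemiring R] (a : R) (q : MvPolynomial σ R) :
    (C a * q).totalDegree ≤ q.totalDegree :=
  (totalDegree_mul _ _).trans_eq (by rw [totalDegree_C, zero_add])

section Certificate

variable {n m d : ℕ} {f : MvPolynomial (Fin n) ℝ} {g : Fin m → MvPolynomial (Fin n) ℝ}

theorem totalDegree_polyG_le (hf : f.totalDegree ≤ d) (hg : ∀ j, (g j).totalDegree ≤ d)
    (lam : Fin m → ℝ) : (polyG f g lam).totalDegree ≤ d :=
  (totalDegree_sub _ _).trans <| max_le hf <| (totalDegree_finsetSum _ _).trans <|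
    Finset.sup_le fun j _ => (totalDegree_C_mul_le _ _).trans (hg j)

theorem exists_isSOS_certificate (hde : Even d) (hd : d ≠ 0) (hf : f.totalDegree ≤ d)
    (hg : ∀ j, (g j).totalDegree ≤ d) {lam : Fin m → ℝ} (hlam : ∀ j, 0 ≤ lam j)
    {z : (Fin n →₀ ℕ) → Fin n → ℝ} (hz : LwFeas d (polyG f g lam) z) :
    ∃ σ₀ : MvPolynomial (Fin n) ℝ, ∃ σ : Fin m → MvPolynomial (Fin n) ℝ,
      IsSOS σ₀ ∧ (∀ j, IsSOS (σ j)) ∧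
      σ₀.totalDegree ≤ d ∧ (∀ j, (σ j * g j).totalDegree ≤ d) ∧
      f - C (eval (0 : Fin n → ℝ) (polyG f g lam) - lwObj d (polyG f g lam) z) =
        σ₀ + ∑ j, σ j * g j := by
  have hG := totalDegree_polyG_le hf hg lam
  refine ⟨_, fun j => C (lam j), (isSumSq_sub_C_eval_add_C_lwObj hde hd hG hz).isSOS,
    fun j => (isSumSq_C (hlam j)).isSOS, ?_, fun j => (totalDegree_C_mul_le _ _).trans (hg j), ?_⟩
  · exact (totalDegree_add _ _).trans <| max_le ((totalDegree_sub_C_le _ _).trans hG)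
      ((totalDegree_C _).trans_le d.zero_le)
  · rw [polyG, map_sub]
    ring

theorem lwGp_le_fsos (hde : Even d) (hd : d ≠ 0) (hf : f.totalDegree ≤ d)
    (hg : ∀ j, (g j).totalDegree ≤ d) {lam : Fin m → ℝ} (hlam : ∀ j, 0 ≤ lam j) :
    lwGp d (polyG f g lam) ≤ fsos d f g := by
  refine EReal.sub_sInf_le ?_
  rintro _ ⟨z, hz, rfl⟩
  exact le_sSup ⟨_, exists_isSOS_certificate hde hd hf hg hlam hz, rfl⟩

end Certificate

theorem stmt2_general {n m : ℕ} (d : ℕ)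
    (f : MvPolynomial (Fin n) ℝ) (g : Fin m → MvPolynomial (Fin n) ℝ)
    (hd2 : 2 ≤ d) (hde : Even d) (hdf : f.totalDegree ≤ d)
    (hdg : ∀ j, (g j).totalDegree ≤ d) :
    (∀ lam : Fin m → ℝ, (∀ j, 0 ≤ lam j) →
      ∀ z, LwFeas d (polyG f g lam) z →
      ∃ σ₀ : MvPolynomial (Fin n) ℝ, ∃ σ : Fin m → MvPolynomial (Fin n) ℝ,
        IsSOS σ₀ ∧ (∀ j, IsSOS (σ j)) ∧
        σ₀.totalDegree ≤ d ∧ (∀ j, (σ j * g j).totalDegree ≤ d) ∧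
        f - C (eval (0 : Fin n → ℝ) (polyG f g lam) - lwObj d (polyG f g lam) z) =
          σ₀ + ∑ j, σ j * g j) ∧
    (∀ lam : Fin m → ℝ, (∀ j, 0 ≤ lam j) → lwGp d (polyG f g lam) ≤ fsos d f g) ∧
    sBound d f g ≤ fsos d f g := by
  have hd : d ≠ 0 := by omega
  exact ⟨fun _ hlam _ hz => exists_isSOS_certificate hde hd hdf hdg hlam hz,
    fun _ hlam => lwGp_le_fsos hde hd hdf hdg hlam,
    sSup_le fun _ ⟨_, hlam, h⟩ => h ▸ lwGp_le_fsos hde hd hdf hdg hlam⟩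

/-- For each `λ ∈ [0,∞)^m` and feasible `z` for `G(λ)` there is an SOS certificate of degree `≤ d`
for `f − (G(λ)(0) − v(z))`; consequently `G(λ)_gp ≤ f_sos^{(d)}` and `s(f,g) ≤ f_sos^{(d)}`. -/
theorem stmt2 {n m : ℕ} (hn : 1 ≤ n) (d : ℕ)
    (f : MvPolynomial (Fin n) ℝ) (g : Fin m → MvPolynomial (Fin n) ℝ)
    (hd2 : 2 ≤ d) (hde : Even d) (hdf : f.totalDegree ≤ d)
    (hdg : ∀ j, (g j).totalDegree ≤ d)
    (hdLeast : ∀ d' : ℕ, Even d' → 2 ≤ d' → f.totalDegree ≤ d' →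
      (∀ j, (g j).totalDegree ≤ d') → d ≤ d') :
    (∀ lam : Fin m → ℝ, (∀ j, 0 ≤ lam j) →
      ∀ z, LwFeas d (polyG f g lam) z →
      ∃ σ₀ : MvPolynomial (Fin n) ℝ, ∃ σ : Fin m → MvPolynomial (Fin n) ℝ,
        IsSOS σ₀ ∧ (∀ j, IsSOS (σ j)) ∧
        σ₀.totalDegree ≤ d ∧ (∀ j, (σ j * g j).totalDegree ≤ d) ∧
        f - C (eval (0 : Fin n → ℝ) (polyG f g lam) - lwObj d (polyG f g lam) z) =
          σ₀ + ∑ j, σ j * g j) ∧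
    (∀ lam : Fin m → ℝ, (∀ j, 0 ≤ lam j) → lwGp d (polyG f g lam) ≤ fsos d f g) ∧
    sBound d f g ≤ fsos d f g :=
  stmt2_general d f g hd2 hde hdf hdg
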